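/- arXiv:2507.23136 — 3 statements merged into one kernel-verified Lean document; each statement's English description precedes it below -/
import Mathlib

section
/- For the logistic sigmoid σ, for all real a and all t ≥ 0: σ'(|a| + t) ≥ e^{-t} σ(a) σ(-a). In particular, the minimum of σ' over the interval [a - t, a + t] is at least e^{-t} σ(a)(1 - σ(a)). -/
noncomputable def logisticSigmoid (z : ℝ) : ℝ := 1 / (1 + Real.exp (-z))

noncomputable def sigmaDeriv (z : ℝ) : ℝ := logisticSigmoid z * logisticSigmoid (-z)

lemma one_add_exp_pos (x : ℝ) : 0 < 1 + Real.exp x := by positivity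

lemma sig_neg (a : ℝ) : logisticSigmoid (-a) = 1 - logisticSigmoid a := by
  unfold logisticSigmoid
  have h1 := one_add_exp_pos (-a)
  have h2 := one_add_exp_pos a
  rw [neg_neg]
  field_simp
  rw [Real.exp_neg]
  have he := Real.exp_pos a
  field_simp
  ring

lemma sigmaDeriv_eq (z : ℝ) :
    sigmaDeriv z = Real.exp (-z) / (1 + Real.exp (-z))^2 := by
  unfold sigmaDeriv logisticSigmoid
  have h1 := one_add_exp_pos (-z)
  have h2 := one_add_exp_pos z
  rw [neg_neg]
  have hez : Real.exp z = (Real.exp (-z))⁻¹ := by rw [← Real.exp_neg, neg_neg]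
  have he := Real.exp_pos (-z)
  rw [hez]
  field_simp
  ring

lemma f_mono {p q : ℝ} (hp : 0 < p) (hpq : p ≤ q) (hq : q ≤ 1) :
    p / (1 + p)^2 ≤ q / (1 + q)^2 := by
  have h1 : (0:ℝ) < (1 + p)^2 := pow_pos (by linarith) 2
  have h2 : (0:ℝ) < (1 + q)^2 := pow_pos (by linarith) 2
  rw [div_le_div_iff₀ h1 h2]
  have hpq1 : (0:ℝ) ≤ 1 - p * q := by nlinarith
  nlinarith [mul_nonneg (sub_nonneg.2 hpq) hpq1]

lemma sigmaDeriv_even (z : ℝ) : sigmaDeriv (-z) = sigmaDeriv z := by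
  unfold sigmaDeriv; rw [neg_neg, mul_comm]

lemma key (a t : ℝ) (ht : 0 ≤ t) :
    sigmaDeriv (|a| + t) ≥ Real.exp (-t) * sigmaDeriv a := by
  have habs : sigmaDeriv |a| = sigmaDeriv a := by
    rcases abs_choice a with h | h <;> rw [h]
    exact sigmaDeriv_even a
  rw [← habs, sigmaDeriv_eq, sigmaDeriv_eq]
  have hu : 0 ≤ |a| := abs_nonneg a
  have he1 : Real.exp (-(|a| + t)) = Real.exp (-t) * Real.exp (-|a|) := by
    rw [← Real.exp_add]; ring_nf
  have het : Real.exp (-t) ≤ 1 := Real.exp_le_one_iff.mpr (by linarith)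
  have heu := Real.exp_pos (-|a|)
  have h1 : (1 + Real.exp (-(|a| + t)))^2 ≤ (1 + Real.exp (-|a|))^2 := by
    have : Real.exp (-(|a| + t)) ≤ Real.exp (-|a|) :=
      Real.exp_le_exp.mpr (by linarith)
    nlinarith [Real.exp_pos (-(|a| + t))]
  have h2 : (0:ℝ) < (1 + Real.exp (-(|a| + t)))^2 := by positivity
  have h3 : (0:ℝ) < (1 + Real.exp (-|a|))^2 := by positivity
  calc Real.exp (-t) * (Real.exp (-|a|) / (1 + Real.exp (-|a|))^2)
      ≤ Real.exp (-t) * (Real.exp (-|a|) / (1 + Real.exp (-(|a| + t)))^2) := by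
        apply mul_le_mul_of_nonneg_left _ (Real.exp_pos _).le
        exact div_le_div_of_nonneg_left heu.le h2 h1
    _ = Real.exp (-(|a| + t)) / (1 + Real.exp (-(|a| + t)))^2 := by
        rw [he1]; ring

/-- for all real `a` and `t ≥ 0`, `σ'(|a| + t) ≥ e^{-t} σ(a)σ(-a)`;
in particular `σ'` is bounded below on `[a - t, a + t]` by
`e^{-t} σ(a)(1 - σ(a))`. -/
theorem sigmaDeriv_interval_lower_bound (a t : ℝ) (ht : 0 ≤ t) :
    sigmaDeriv (|a| + t) ≥ Real.exp (-t) * (logisticSigmoid a * logisticSigmoid (-a)) ∧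
    ∀ z ∈ Set.Icc (a - t) (a + t),
      sigmaDeriv z ≥ Real.exp (-t) * (logisticSigmoid a * (1 - logisticSigmoid a)) := by
  have hkey := key a t ht
  constructor
  · exact hkey
  · intro z hz
    rw [← sig_neg]
    refine le_trans hkey ?_
    -- show sigmaDeriv (|a|+t) ≤ sigmaDeriv z
    have habsz : |z| ≤ |a| + t := by
      rw [abs_le]
      rcases hz with ⟨h1, h2⟩
      constructor
      · have := neg_abs_le a; linarith
      · have := le_abs_self a; linarith
    have habs : sigmaDeriv |z| = sigmaDeriv z := by
      rcases abs_choice z with h | h <;> rw [h]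
      exact sigmaDeriv_even z
    rw [← habs, sigmaDeriv_eq, sigmaDeriv_eq]
    apply f_mono (Real.exp_pos _) (Real.exp_le_exp.mpr (by linarith))
    exact Real.exp_le_one_iff.mpr (by linarith [abs_nonneg z])
end

section
/- (High-probability gradient bound.) Let p_i = σ(⟨x_i, θ*⟩), let a_i be independent with a_i = 1-p_i w.p. p_i and a_i = -p_i w.p. 1-p_i, let g = Σ_i a_i x_i, and let H = Σ_i p_i(1-p_i) x_i x_iᵀ be positive definite with minimum eigenvalue λ_min. Let X_max = max_i ‖x_i‖₂. Then for any c with 0 < c < √λ_min/(2 X_max), Pr(‖H^{-1} g‖_H ≥ c) ≤ 2d exp(-c²/(3d)). -/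
/-!
Rescale the eigenvectors of `H` to an `H`-orthonormal basis `u_k = λ_k^{-1/2} v_k`. Then
`‖H⁻¹g‖_H² = ∑_k ⟨g, u_k⟩²`, and each `⟨g, u_k⟩ = ∑_i a_i ⟨x_i, u_k⟩` is a sum of independent
centred two-point variables with total variance `u_kᵀ H u_k = 1` and coefficients bounded by
`X_max / √λ_min`. On `|s| ≤ 1/2` we have `exp s ≤ 1 + s + 2s²/3`, which bounds each moment
generating function, so the Chernoff bound gives `P(|⟨g, u_k⟩| ≥ t) ≤ 2 exp(-t²/3)` as long as
`t X_max / √λ_min ≤ 1/2`. Finally, if `‖H⁻¹g‖_H ≥ c` then some coordinate has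
`|⟨g, u_k⟩| ≥ c/√d`, and a union bound over the `d` coordinates finishes.
-/

open MeasureTheory

open ProbabilityTheory Matrix

theorem Real.exp_le_one_add_add_two_thirds_mul_sq {u : ℝ} (hu : |u| ≤ 1 / 2) :
    Real.exp u ≤ 1 + u + 2 / 3 * u ^ 2 := by
  have h := Real.exp_bound (hu.trans (by norm_num)) (n := 3) (by norm_num)
  simp only [Finset.sum_range_succ, Finset.sum_range_zero] at h
  norm_num [Nat.factorial] at h
  have hcube : |u| ^ 3 ≤ u ^ 2 * (1 / 2) := by
    rw [pow_succ, sq_abs]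
    exact mul_le_mul_of_nonneg_left hu (sq_nonneg _)
  linarith [(abs_le.1 h).2, sq_nonneg u]

structure IsCenteredBernoulli {Ω : Type*} [MeasurableSpace Ω] (P : Measure Ω) (q : ℝ)
    (X : Ω → ℝ) : Prop where
  measurable : Measurable X
  eq_or_eq : ∀ ω, X ω = 1 - q ∨ X ω = -q
  measure_eq : P {ω | X ω = 1 - q} = ENNReal.ofReal q

namespace IsCenteredBernoulli

variable {Ω : Type*} [MeasurableSpace Ω] {P : Measure Ω} {q : ℝ} {X : Ω → ℝ}

theorem le_one [IsProbabilityMeasure P] (hX : IsCenteredBernoulli P q X) : q ≤ 1 :=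
  ENNReal.ofReal_le_one.1 (hX.measure_eq ▸ prob_le_one)

theorem measurableSet_eq (hX : IsCenteredBernoulli P q X) : MeasurableSet {ω | X ω = 1 - q} :=
  hX.measurable (measurableSet_singleton _)

theorem comp_eq (hX : IsCenteredBernoulli P q X) (f : ℝ → ℝ) :
    (fun ω => f (X ω)) =
      fun ω => {ω | X ω = 1 - q}.indicator (fun _ => f (1 - q) - f (-q)) ω + f (-q) := by
  funext ω
  by_cases h : X ω = 1 - q
  · simp [h]
  · rw [Set.indicator_of_notMem (s := {ω | X ω = 1 - q}) h, (hX.eq_or_eq ω).resolve_left h,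
      zero_add]

theorem integrable_comp [IsFiniteMeasure P] (hX : IsCenteredBernoulli P q X) (f : ℝ → ℝ) :
    Integrable (fun ω => f (X ω)) P := by
  rw [hX.comp_eq f]
  exact ((integrable_const _).indicator hX.measurableSet_eq).add (integrable_const _)

theorem integral_comp [IsProbabilityMeasure P] (hX : IsCenteredBernoulli P q X) (hq : 0 ≤ q)
    (f : ℝ → ℝ) : ∫ ω, f (X ω) ∂P = q * f (1 - q) + (1 - q) * f (-q) := by
  rw [hX.comp_eq f, integral_add ((integrable_const _).indicator hX.measurableSet_eq)
      (integrable_const _),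
    integral_indicator_const _ hX.measurableSet_eq, integral_const,
    measureReal_def, hX.measure_eq, ENNReal.toReal_ofReal hq]
  simp only [smul_eq_mul, probReal_univ]
  ring

theorem mgf_le [IsProbabilityMeasure P] (hX : IsCenteredBernoulli P q X) (hq : 0 ≤ q) {s : ℝ}
    (hs : |s| ≤ 1 / 2) : mgf X P s ≤ Real.exp (2 / 3 * q * (1 - q) * s ^ 2) := by
  have hq1 := hX.le_one
  have hpos : |s * (1 - q)| ≤ 1 / 2 := by
    rw [abs_mul, abs_of_nonneg (sub_nonneg.2 hq1)]
    nlinarith [abs_nonneg s]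
  have hneg : |s * -q| ≤ 1 / 2 := by
    rw [abs_mul, abs_neg, abs_of_nonneg hq]
    nlinarith [abs_nonneg s]
  calc mgf X P s = q * Real.exp (s * (1 - q)) + (1 - q) * Real.exp (s * -q) :=
        hX.integral_comp hq fun y => Real.exp (s * y)
    _ ≤ q * (1 + s * (1 - q) + 2 / 3 * (s * (1 - q)) ^ 2)
          + (1 - q) * (1 + s * -q + 2 / 3 * (s * -q) ^ 2) :=
        add_le_add
          (mul_le_mul_of_nonneg_left (Real.exp_le_one_add_add_two_thirds_mul_sq hpos) hq)
          (mul_le_mul_of_nonneg_left (Real.exp_le_one_add_add_two_thirds_mul_sq hneg)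
            (sub_nonneg.2 hq1))
    _ = 2 / 3 * q * (1 - q) * s ^ 2 + 1 := by ring
    _ ≤ Real.exp (2 / 3 * q * (1 - q) * s ^ 2) := Real.add_one_le_exp _

end IsCenteredBernoulli

section Bernstein

variable {Ω ι : Type*} [MeasurableSpace Ω] {P : Measure Ω} [IsProbabilityMeasure P] [Fintype ι]
  {a : ι → Ω → ℝ} {q b : ι → ℝ} {t : ℝ}

theorem measure_sum_mul_ge_le_of_isCenteredBernoulli
    (ha : ∀ i, IsCenteredBernoulli P (q i) (a i)) (hq : ∀ i, 0 ≤ q i) (hindep : iIndepFun a P)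
    (ht : 0 ≤ t) (hbt : ∀ i, t * |b i| ≤ 1 / 2) (hvar : ∑ i, q i * (1 - q i) * b i ^ 2 ≤ 1) :
    P {ω | t ≤ ∑ i, a i ω * b i} ≤ ENNReal.ofReal (Real.exp (-t ^ 2 / 3)) := by
  set Y : ι → Ω → ℝ := fun i ω => a i ω * b i
  have hYmeas : ∀ i, Measurable (Y i) := fun i => (ha i).measurable.mul_const _
  have hYindep : iIndepFun Y P := hindep.comp _ fun i => measurable_mul_const (b i)
  have hmgf : ∀ i, mgf (Y i) P t ≤ Real.exp (2 / 3 * t ^ 2 * (q i * (1 - q i) * b i ^ 2)) := by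
    intro i
    have hs : |b i * t| ≤ 1 / 2 := by rw [abs_mul, abs_of_nonneg ht, mul_comm]; exact hbt i
    calc mgf (Y i) P t = mgf (a i) P (b i * t) := by
          simp only [Y, mul_comm _ (b i)]; exact mgf_const_mul (b i)
      _ ≤ Real.exp (2 / 3 * q i * (1 - q i) * (b i * t) ^ 2) := (ha i).mgf_le (hq i) hs
      _ = Real.exp (2 / 3 * t ^ 2 * (q i * (1 - q i) * b i ^ 2)) := by ring_nf
  have hmgf_sum : mgf (∑ i, Y i) P t ≤ Real.exp (2 / 3 * t ^ 2) :=
    calc mgf (∑ i, Y i) P t = ∏ i, mgf (Y i) P t := hYindep.mgf_sum hYmeas _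
      _ ≤ ∏ i, Real.exp (2 / 3 * t ^ 2 * (q i * (1 - q i) * b i ^ 2)) :=
        Finset.prod_le_prod (fun _ _ => mgf_nonneg) fun i _ => hmgf i
      _ = Real.exp (2 / 3 * t ^ 2 * ∑ i, q i * (1 - q i) * b i ^ 2) := by
        rw [← Real.exp_sum, Finset.mul_sum]
      _ ≤ Real.exp (2 / 3 * t ^ 2) := by
        rw [Real.exp_le_exp]; nlinarith [sq_nonneg t]
  have hint : Integrable (fun ω => Real.exp (t * (∑ i, Y i) ω)) P :=
    hYindep.integrable_exp_mul_sum hYmeas fun i _ =>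
      (ha i).integrable_comp fun y => Real.exp (t * (y * b i))
  have hchernoff := measure_ge_le_exp_mul_mgf t ht hint
  simp only [Finset.sum_apply, Y] at hchernoff
  rw [ENNReal.le_ofReal_iff_toReal_le (measure_ne_top _ _) (Real.exp_nonneg _), ← measureReal_def]
  calc _ ≤ Real.exp (-t * t) * mgf (∑ i, Y i) P t := hchernoff
    _ ≤ Real.exp (-t * t) * Real.exp (2 / 3 * t ^ 2) := by gcongr
    _ = Real.exp (-t ^ 2 / 3) := by rw [← Real.exp_add]; ring_nf

theorem measure_abs_sum_mul_ge_le_of_isCenteredBernoulli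
    (ha : ∀ i, IsCenteredBernoulli P (q i) (a i)) (hq : ∀ i, 0 ≤ q i) (hindep : iIndepFun a P)
    (ht : 0 ≤ t) (hbt : ∀ i, t * |b i| ≤ 1 / 2) (hvar : ∑ i, q i * (1 - q i) * b i ^ 2 ≤ 1) :
    P {ω | t ≤ |∑ i, a i ω * b i|} ≤ ENNReal.ofReal (2 * Real.exp (-t ^ 2 / 3)) := by
  have hsub : {ω | t ≤ |∑ i, a i ω * b i|} ⊆
      {ω | t ≤ ∑ i, a i ω * b i} ∪ {ω | t ≤ ∑ i, a i ω * -b i} := by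
    intro ω hω
    simpa only [Set.mem_union, Set.mem_ofPred_eq, mul_neg, Finset.sum_neg_distrib, ← le_abs]
      using hω
  calc _ ≤ _ := (measure_mono hsub).trans (measure_union_le _ _)
    _ ≤ ENNReal.ofReal (Real.exp (-t ^ 2 / 3)) + ENNReal.ofReal (Real.exp (-t ^ 2 / 3)) :=
      add_le_add (measure_sum_mul_ge_le_of_isCenteredBernoulli ha hq hindep ht hbt hvar)
        (measure_sum_mul_ge_le_of_isCenteredBernoulli ha hq hindep ht (by simpa using hbt)
          (by simpa using hvar))
    _ = ENNReal.ofReal (2 * Real.exp (-t ^ 2 / 3)) := by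
      rw [← ENNReal.ofReal_add (Real.exp_nonneg _) (Real.exp_nonneg _), two_mul]

end Bernstein

theorem OrthonormalBasis.sum_dotProduct_mul_dotProduct {ι n : Type*} [Fintype ι] [Fintype n]
    (e : OrthonormalBasis ι ℝ (EuclideanSpace ℝ n)) (v w : n → ℝ) :
    ∑ k, (v ⬝ᵥ ⇑(e k)) * (⇑(e k) ⬝ᵥ w) = v ⬝ᵥ w := by
  have h := e.sum_inner_mul_inner (WithLp.toLp 2 v) (WithLp.toLp 2 w)
  simp only [EuclideanSpace.inner_eq_star_dotProduct, star_trivial] at h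
  rw [dotProduct_comm v w, ← h]
  exact Finset.sum_congr rfl fun k _ => by rw [dotProduct_comm v, dotProduct_comm w]

theorem OrthonormalBasis.dotProduct_self {ι n : Type*} [Fintype ι] [Fintype n]
    (e : OrthonormalBasis ι ℝ (EuclideanSpace ℝ n)) (k : ι) : ⇑(e k) ⬝ᵥ ⇑(e k) = 1 := by
  have h := real_inner_self_eq_norm_sq (e k)
  rwa [e.orthonormal.1 k, one_pow, EuclideanSpace.inner_eq_star_dotProduct, star_trivial] at h

theorem Matrix.dotProduct_sum_smul_vecMulVec_mulVec {ι n : Type*} [Fintype ι] [Fintype n]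
    (c : ι → ℝ) (y : ι → n → ℝ) (w : n → ℝ) :
    w ⬝ᵥ (∑ i, c i • vecMulVec (y i) (y i)) *ᵥ w = ∑ i, c i * (y i ⬝ᵥ w) ^ 2 := by
  simp only [sum_mulVec, smul_mulVec, vecMulVec_mulVec, op_smul_eq_smul, dotProduct_comm w,
    sum_dotProduct, smul_dotProduct, smul_eq_mul]
  exact Finset.sum_congr rfl fun i _ => by ring

namespace Matrix.IsHermitian

variable {n : Type*} [Fintype n] {A : Matrix n n ℝ}

theorem dotProduct_mulVec_comm (hA : A.IsHermitian) (v w : n → ℝ) :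
    v ⬝ᵥ A *ᵥ w = w ⬝ᵥ A *ᵥ v := by
  rw [dotProduct_mulVec, ← mulVec_transpose, dotProduct_comm,
    ← conjTranspose_eq_transpose_of_trivial, hA.eq]

variable [DecidableEq n]

theorem eigenvectorBasis_dotProduct_mulVec (hA : A.IsHermitian) (k : n) (w : n → ℝ) :
    ⇑(hA.eigenvectorBasis k) ⬝ᵥ A *ᵥ w = hA.eigenvalues k * (w ⬝ᵥ ⇑(hA.eigenvectorBasis k)) := by
  rw [hA.dotProduct_mulVec_comm, mulVec_eigenvectorBasis, dotProduct_smul, smul_eq_mul]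

theorem le_eigenvalues (hA : A.IsHermitian) {m : ℝ}
    (hm : ∀ v : n → ℝ, m * ∑ j, v j ^ 2 ≤ v ⬝ᵥ A *ᵥ v) (k : n) : m ≤ hA.eigenvalues k := by
  have hk := hm (hA.eigenvectorBasis k)
  have hnorm := hA.eigenvectorBasis.dotProduct_self k
  rw [hA.eigenvectorBasis_dotProduct_mulVec, dotProduct_comm, hnorm, mul_one] at hk
  simp only [dotProduct, ← sq] at hnorm
  rwa [hnorm, mul_one] at hk

noncomputable def scaledEigenvector (hA : A.IsHermitian) (k : n) : n → ℝ :=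
  (√(hA.eigenvalues k))⁻¹ • ⇑(hA.eigenvectorBasis k)

theorem abs_dotProduct_scaledEigenvector_le (hA : A.IsHermitian) (x : EuclideanSpace ℝ n)
    (k : n) : |⇑x ⬝ᵥ hA.scaledEigenvector k| ≤ ‖x‖ / √(hA.eigenvalues k) := by
  have hcs := abs_real_inner_le_norm (hA.eigenvectorBasis k) x
  rw [hA.eigenvectorBasis.orthonormal.1 k, one_mul, EuclideanSpace.inner_eq_star_dotProduct,
    star_trivial] at hcs
  rw [scaledEigenvector, dotProduct_smul, smul_eq_mul, abs_mul, abs_inv,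
    abs_of_nonneg (Real.sqrt_nonneg _), inv_mul_eq_div]
  gcongr

theorem abs_dotProduct_scaledEigenvector_le_div_sqrt (hA : A.IsHermitian) {m X : ℝ} (hm : 0 < m)
    (hmA : ∀ v : n → ℝ, m * ∑ j, v j ^ 2 ≤ v ⬝ᵥ A *ᵥ v) {x : EuclideanSpace ℝ n} (hx : ‖x‖ ≤ X)
    (k : n) : |⇑x ⬝ᵥ hA.scaledEigenvector k| ≤ X / √m :=
  (hA.abs_dotProduct_scaledEigenvector_le x k).trans <| div_le_div₀ ((norm_nonneg _).trans hx) hx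
    (Real.sqrt_pos.2 hm) (Real.sqrt_le_sqrt (hA.le_eigenvalues hmA k))

end Matrix.IsHermitian

namespace Matrix.PosDef

variable {n : Type*} [Fintype n] [DecidableEq n] {A : Matrix n n ℝ}

theorem scaledEigenvector_dotProduct_mulVec_self (hA : A.PosDef) (k : n) :
    hA.isHermitian.scaledEigenvector k ⬝ᵥ A *ᵥ hA.isHermitian.scaledEigenvector k = 1 := by
  have hk := hA.eigenvalues_pos k
  rw [IsHermitian.scaledEigenvector, mulVec_smul, smul_dotProduct, dotProduct_smul,
    hA.isHermitian.eigenvectorBasis_dotProduct_mulVec,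
    hA.isHermitian.eigenvectorBasis.dotProduct_self, smul_eq_mul, smul_eq_mul, mul_one,
    ← mul_assoc, ← mul_inv, Real.mul_self_sqrt hk.le, inv_mul_cancel₀ hk.ne']

theorem inv_mulVec_dotProduct_mulVec_inv_mulVec (hA : A.PosDef) (g : n → ℝ) :
    (A⁻¹ *ᵥ g) ⬝ᵥ A *ᵥ (A⁻¹ *ᵥ g) = ∑ k, (g ⬝ᵥ hA.isHermitian.scaledEigenvector k) ^ 2 := by
  set e := hA.isHermitian.eigenvectorBasis
  set w := A⁻¹ *ᵥ g
  have hw : A *ᵥ w = g := by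
    rw [mulVec_mulVec, mul_nonsing_inv _ (isUnit_iff_ne_zero.2 hA.det_pos.ne'), one_mulVec]
  rw [hw, ← e.sum_dotProduct_mul_dotProduct]
  refine Finset.sum_congr rfl fun k _ => ?_
  have hk := hA.eigenvalues_pos k
  have hek : ⇑(e k) ⬝ᵥ g = hA.isHermitian.eigenvalues k * (w ⬝ᵥ ⇑(e k)) := by
    rw [← hw, hA.isHermitian.eigenvectorBasis_dotProduct_mulVec]
  rw [IsHermitian.scaledEigenvector, dotProduct_smul, smul_eq_mul, dotProduct_comm g, hek,
    mul_pow, inv_pow, Real.sq_sqrt hk.le]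
  field_simp

end Matrix.PosDef

theorem exists_le_abs_of_le_sqrt_sum_sq {ι : Type*} [Fintype ι] (s : ι → ℝ) {c : ℝ} (hc : 0 < c)
    (h : c ≤ √(∑ k, s k ^ 2)) : ∃ k, c / √(Fintype.card ι) ≤ |s k| := by
  have hsq : c ^ 2 ≤ ∑ k, s k ^ 2 := (Real.le_sqrt' hc).1 h
  have hne : (Finset.univ : Finset ι).Nonempty := by
    by_contra hempty
    rw [Finset.not_nonempty_iff_eq_empty.1 hempty, Finset.sum_empty] at hsq
    exact (pow_pos hc 2).not_ge hsq
  have hcard : (0 : ℝ) < Fintype.card ι := by exact_mod_cast Finset.card_pos.2 hne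
  have hsum : ∑ _k : ι, (c / √(Fintype.card ι)) ^ 2 ≤ ∑ k, s k ^ 2 := by
    rwa [Finset.sum_const, Finset.card_univ, nsmul_eq_mul, div_pow, Real.sq_sqrt hcard.le,
      mul_div_cancel₀ _ hcard.ne']
  obtain ⟨k, -, hk⟩ := Finset.exists_le_of_sum_le hne hsum
  exact ⟨k, abs_of_nonneg (by positivity : 0 ≤ c / √(Fintype.card ι)) ▸ sq_le_sq.1 hk⟩

theorem measure_le_sqrt_sum_sq_le {Ω ι : Type*} [MeasurableSpace Ω] (P : Measure Ω) [Fintype ι]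
    (S : ι → Ω → ℝ) {c : ℝ} (hc : 0 < c) :
    P {ω | c ≤ √(∑ k, S k ω ^ 2)} ≤ ∑ k, P {ω | c / √(Fintype.card ι) ≤ |S k ω|} :=
  calc _ ≤ P (⋃ k ∈ Finset.univ, {ω | c / √(Fintype.card ι) ≤ |S k ω|}) := measure_mono
        fun ω hω => by simpa using exists_le_abs_of_le_sqrt_sum_sq (S · ω) hc hω
    _ ≤ _ := measure_biUnion_finset_le _ _

theorem grad_high_prob_bound_general
    {d n : ℕ} {Ω : Type*} [MeasurableSpace Ω] (P : Measure Ω) [IsProbabilityMeasure P]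
    (x : Fin n → EuclideanSpace ℝ (Fin d)) (θstar : EuclideanSpace ℝ (Fin d))
    (p : Fin n → ℝ) (hp : ∀ i, p i = logisticSigmoid (inner ℝ (x i) θstar))
    (Xmax : ℝ) (hX : ∀ i, ‖x i‖ ≤ Xmax)
    (H : Matrix (Fin d) (Fin d) ℝ)
    (hH : H = ∑ i, (p i * (1 - p i)) • Matrix.vecMulVec (fun k => x i k) (fun k => x i k))
    (hHpd : H.PosDef)
    (lammin : ℝ)
    (hlam : ∀ v : Fin d → ℝ,
      lammin * (∑ j, v j ^ 2) ≤ dotProduct v (H.mulVec v))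
    (a : Fin n → Ω → ℝ)
    (hmeas : ∀ i, Measurable (a i))
    (hval : ∀ i ω, a i ω = 1 - p i ∨ a i ω = -(p i))
    (hprob1 : ∀ i, P {ω | a i ω = 1 - p i} = ENNReal.ofReal (p i))
    (hindep : ProbabilityTheory.iIndepFun a P)
    (c : ℝ) (hc0 : 0 < c) (hc : c < Real.sqrt lammin / (2 * Xmax)) :
    P {ω |
        c ≤ Real.sqrt (dotProduct
          (H⁻¹.mulVec (∑ i, a i ω • (fun k => x i k)))
          (H.mulVec (H⁻¹.mulVec (∑ i, a i ω • (fun k => x i k)))))} ≤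
      ENNReal.ofReal (2 * d * Real.exp (-(c ^ 2) / (3 * d))) := by
  have hp0 : ∀ i, 0 ≤ p i := fun i => by rw [hp i, logisticSigmoid]; positivity
  have ha : ∀ i, IsCenteredBernoulli P (p i) (a i) := fun i => ⟨hmeas i, hval i, hprob1 i⟩
  obtain ⟨hlam_pos, hXmax_pos⟩ : 0 < √lammin ∧ 0 < 2 * Xmax :=
    (div_pos_iff.1 (hc0.trans hc)).resolve_right fun h => (Real.sqrt_nonneg _).not_gt h.1
  set u := hHpd.isHermitian.scaledEigenvector
  set t := c / √(d : ℝ)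
  have hvar : ∀ k, ∑ i, p i * (1 - p i) * ((x i).ofLp ⬝ᵥ u k) ^ 2 ≤ 1 := fun k => le_of_eq <|
    calc _ = u k ⬝ᵥ H *ᵥ u k := by rw [hH, dotProduct_sum_smul_vecMulVec_mulVec]
      _ = 1 := hHpd.scaledEigenvector_dotProduct_mulVec_self k
  have hbt : ∀ k i, t * |(x i).ofLp ⬝ᵥ u k| ≤ 1 / 2 := fun k i => by
    have htc : t ≤ c := div_le_self hc0.le (Real.one_le_sqrt.2 (by exact_mod_cast k.pos))
    have hb := hHpd.isHermitian.abs_dotProduct_scaledEigenvector_le_div_sqrt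
      (Real.sqrt_pos.1 hlam_pos) hlam (hX i) k
    rw [lt_div_iff₀ hXmax_pos] at hc
    calc t * |(x i).ofLp ⬝ᵥ u k| ≤ c * (Xmax / √lammin) := by gcongr
      _ ≤ 1 / 2 := by rw [mul_div_assoc', div_le_iff₀ hlam_pos]; linarith
  calc _ = P {ω | c ≤ √(∑ k, (∑ i, a i ω * ((x i).ofLp ⬝ᵥ u k)) ^ 2)} := by
        simp only [hHpd.inv_mulVec_dotProduct_mulVec_inv_mulVec, sum_dotProduct, smul_dotProduct,
          smul_eq_mul, u]
    _ ≤ ∑ k, P {ω | t ≤ |∑ i, a i ω * ((x i).ofLp ⬝ᵥ u k)|} := by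
        simpa only [Fintype.card_fin] using measure_le_sqrt_sum_sq_le P
          (fun k ω => ∑ i, a i ω * ((x i).ofLp ⬝ᵥ u k)) hc0
    _ ≤ ∑ _k : Fin d, ENNReal.ofReal (2 * Real.exp (-t ^ 2 / 3)) :=
      Finset.sum_le_sum fun k _ => measure_abs_sum_mul_ge_le_of_isCenteredBernoulli ha hp0 hindep
        (by positivity) (hbt k) (hvar k)
    _ = _ := by
      rw [Finset.sum_const, Finset.card_univ, Fintype.card_fin, nsmul_eq_mul,
        ← ENNReal.ofReal_natCast, ← ENNReal.ofReal_mul (Nat.cast_nonneg _), div_pow,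
        Real.sq_sqrt (Nat.cast_nonneg _)]
      ring_nf

/-- high-probability gradient bound: with coefficients `a i`
independent, equal to `1 - p i` w.p. `p i` and `-(p i)` w.p. `1 - p i`,
`g = ∑ i, a i • x i`, `H = ∑ i, p i (1-p i) x i x iᵀ` positive definite with
minimum eigenvalue `λ_min`, and `X_max ≥ ‖x i‖₂` for all `i`: for any
`0 < c < √λ_min / (2 X_max)`,
`Pr(‖H⁻¹ g‖_H ≥ c) ≤ 2 d exp(-c²/(3d))`. -/
theorem grad_high_prob_bound
    {d n : ℕ} {Ω : Type*} [MeasurableSpace Ω] (P : Measure Ω) [IsProbabilityMeasure P]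
    (x : Fin n → EuclideanSpace ℝ (Fin d)) (θstar : EuclideanSpace ℝ (Fin d))
    (p : Fin n → ℝ) (hp : ∀ i, p i = logisticSigmoid (inner ℝ (x i) θstar))
    (Xmax : ℝ) (hXpos : 0 < Xmax) (hX : ∀ i, ‖x i‖ ≤ Xmax)
    (H : Matrix (Fin d) (Fin d) ℝ)
    (hH : H = ∑ i, (p i * (1 - p i)) • Matrix.vecMulVec (fun k => x i k) (fun k => x i k))
    (hHpd : H.PosDef)
    (lammin : ℝ) (hlampos : 0 < lammin)
    (hlam : ∀ v : Fin d → ℝ,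
      lammin * (∑ j, v j ^ 2) ≤ dotProduct v (H.mulVec v))
    (a : Fin n → Ω → ℝ)
    (hmeas : ∀ i, Measurable (a i))
    (hval : ∀ i ω, a i ω = 1 - p i ∨ a i ω = -(p i))
    (hprob1 : ∀ i, P {ω | a i ω = 1 - p i} = ENNReal.ofReal (p i))
    (hindep : ProbabilityTheory.iIndepFun a P)
    (c : ℝ) (hc0 : 0 < c) (hc : c < Real.sqrt lammin / (2 * Xmax)) :
    P {ω |
        c ≤ Real.sqrt (dotProduct
          (H⁻¹.mulVec (∑ i, a i ω • (fun k => x i k)))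
          (H.mulVec (H⁻¹.mulVec (∑ i, a i ω • (fun k => x i k)))))} ≤
      ENNReal.ofReal (2 * d * Real.exp (-(c ^ 2) / (3 * d))) :=
  grad_high_prob_bound_general P x θstar p hp Xmax hX H hH hHpd lammin hlam a hmeas hval hprob1
    hindep c hc0 hc
end

section
/- Let ŷ and p̂ be random variables with ŷ = σ(Z) and p = σ(z₀) for a fixed real z₀, where conditionally on an event A we have |Z - z₀| ≤ t almost surely for some t ≥ 0. Then on A, |σ(Z) - σ(z₀)| ≤ e^{t} p (1-p) |Z - z₀| and |σ(Z) - σ(z₀)| ≥ e^{-t} p (1-p) |Z - z₀| almost surely. -/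
/-!
By the mean value theorem `σ z - σ z₀ = σ' ξ * (z - z₀)` for some `ξ` between `z₀` and `z`.
Writing `σ' x = σ x * σ (-x)` and using `σ x ≤ exp (max (x - y) 0) * σ y` for both factors gives
`σ' x ≤ exp |x - y| * σ' y`, since `max a 0 + max (-a) 0 = |a|`; applied in both directions
to `ξ` and `z₀` this squeezes `σ' ξ` between `e^{-t} p (1 - p)` and `e^t p (1 - p)`.
-/

open MeasureTheory

theorem logisticSigmoid_eq_sigmoid : logisticSigmoid = Real.sigmoid :=
  funext fun _ => one_div _

theorem exists_mem_uIcc_sub_eq_mul_sub {f f' : ℝ → ℝ} (hf : ∀ x, HasDerivAt f (f' x) x)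
    (a b : ℝ) : ∃ ξ ∈ Set.uIcc a b, f b - f a = f' ξ * (b - a) := by
  wlog hab : a ≤ b generalizing a b
  · obtain ⟨ξ, hξ, h⟩ := this b a (le_of_not_ge hab)
    exact ⟨ξ, Set.uIcc_comm a b ▸ hξ, by linarith⟩
  rcases hab.eq_or_lt with rfl | hlt
  · exact ⟨a, Set.left_mem_uIcc, by ring⟩
  obtain ⟨ξ, hξ, hslope⟩ := exists_hasDerivAt_eq_slope f f' hlt
    (fun x _ => (hf x).continuousAt.continuousWithinAt) (fun x _ => hf x)
  refine ⟨ξ, Set.Icc_subset_uIcc (Set.Ioo_subset_Icc_self hξ), ?_⟩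
  rw [hslope, div_mul_cancel₀ _ (sub_ne_zero.mpr hlt.ne')]

namespace Real

theorem sigmoid_mul_one_sub_pos (x : ℝ) : 0 < sigmoid x * (1 - sigmoid x) :=
  mul_pos (sigmoid_pos x) (sub_pos.mpr (sigmoid_lt_one x))

theorem sigmoid_le_exp_mul_sigmoid (x y : ℝ) : sigmoid x ≤ exp (max (x - y) 0) * sigmoid y := by
  rw [sigmoid_def, sigmoid_def, ← div_eq_mul_inv, inv_eq_one_div,
    div_le_div_iff₀ (by positivity) (by positivity)]
  have h_one : 1 ≤ exp (max (x - y) 0) := one_le_exp (le_max_right _ _)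
  have h_exp : exp (-y) ≤ exp (max (x - y) 0) * exp (-x) := by
    rw [← exp_add]
    exact exp_le_exp.mpr (by linarith [le_max_left (x - y) 0])
  linarith

theorem sigmoid_mul_one_sub_le_exp_abs_mul (x y : ℝ) :
    sigmoid x * (1 - sigmoid x) ≤ exp |x - y| * (sigmoid y * (1 - sigmoid y)) := by
  simp only [← sigmoid_neg]
  calc sigmoid x * sigmoid (-x)
      ≤ (exp (max (x - y) 0) * sigmoid y) * (exp (max (-x - -y) 0) * sigmoid (-y)) :=
        mul_le_mul (sigmoid_le_exp_mul_sigmoid x y) (sigmoid_le_exp_mul_sigmoid (-x) (-y))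
          (sigmoid_pos _).le (mul_nonneg (exp_pos _).le (sigmoid_pos _).le)
    _ = exp |x - y| * (sigmoid y * sigmoid (-y)) := by
        rw [neg_sub_neg, ← neg_sub x y, ← max_zero_add_max_neg_zero_eq_abs_self, exp_add]
        ring

theorem sigmoid_mul_one_sub_le_exp_mul {x y t : ℝ} (h : |x - y| ≤ t) :
    sigmoid x * (1 - sigmoid x) ≤ exp t * (sigmoid y * (1 - sigmoid y)) := by
  calc sigmoid x * (1 - sigmoid x) ≤ exp |x - y| * (sigmoid y * (1 - sigmoid y)) :=
        sigmoid_mul_one_sub_le_exp_abs_mul x y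
    _ ≤ exp t * (sigmoid y * (1 - sigmoid y)) := by
        gcongr
        exact (sigmoid_mul_one_sub_pos y).le

theorem abs_sigmoid_sub_le_and_ge {z₀ z t : ℝ} (h : |z - z₀| ≤ t) :
    |sigmoid z - sigmoid z₀| ≤ exp t * (sigmoid z₀ * (1 - sigmoid z₀)) * |z - z₀| ∧
      exp (-t) * (sigmoid z₀ * (1 - sigmoid z₀)) * |z - z₀| ≤ |sigmoid z - sigmoid z₀| := by
  obtain ⟨ξ, hξ, h_mvt⟩ := exists_mem_uIcc_sub_eq_mul_sub hasDerivAt_sigmoid z₀ z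
  have hξ_near : |ξ - z₀| ≤ t := (Set.abs_sub_left_of_mem_uIcc hξ).trans h
  rw [h_mvt, abs_mul, abs_of_pos (sigmoid_mul_one_sub_pos ξ)]
  refine ⟨mul_le_mul_of_nonneg_right ?_ (abs_nonneg _),
    mul_le_mul_of_nonneg_right ?_ (abs_nonneg _)⟩
  · exact sigmoid_mul_one_sub_le_exp_mul hξ_near
  · rw [exp_neg, inv_mul_le_iff₀ (exp_pos t)]
    exact sigmoid_mul_one_sub_le_exp_mul (abs_sub_comm ξ z₀ ▸ hξ_near)

end Real

theorem sigmoid_mvt_bounds_on_event_general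
    {Ω : Type*} [MeasurableSpace Ω] (P : Measure Ω)
    (A : Set Ω)
    (Z : Ω → ℝ)
    (z₀ t : ℝ)
    (p : ℝ) (hp : p = logisticSigmoid z₀)
    (hclose : ∀ᵐ ω ∂P, ω ∈ A → |Z ω - z₀| ≤ t) :
    ∀ᵐ ω ∂P, ω ∈ A →
      |logisticSigmoid (Z ω) - logisticSigmoid z₀| ≤
          Real.exp t * (p * (1 - p)) * |Z ω - z₀| ∧
        Real.exp (-t) * (p * (1 - p)) * |Z ω - z₀| ≤
          |logisticSigmoid (Z ω) - logisticSigmoid z₀| := by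
  filter_upwards [hclose] with ω h_close h_mem
  rw [hp, logisticSigmoid_eq_sigmoid]
  exact Real.abs_sigmoid_sub_le_and_ge (h_close h_mem)

/-- if on an event `A` we have `|Z - z₀| ≤ t` a.s. with `t ≥ 0`,
then, with `p = σ(z₀)`, almost surely on `A`,
`e^{-t} p (1-p) |Z - z₀| ≤ |σ(Z) - σ(z₀)| ≤ e^{t} p (1-p) |Z - z₀|`. -/
theorem sigmoid_mvt_bounds_on_event
    {Ω : Type*} [MeasurableSpace Ω] (P : Measure Ω) [IsProbabilityMeasure P]
    (A : Set Ω) (hA : MeasurableSet A)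
    (Z : Ω → ℝ) (hZ : Measurable Z)
    (z₀ t : ℝ) (ht : 0 ≤ t)
    (p : ℝ) (hp : p = logisticSigmoid z₀)
    (hclose : ∀ᵐ ω ∂P, ω ∈ A → |Z ω - z₀| ≤ t) :
    ∀ᵐ ω ∂P, ω ∈ A →
      |logisticSigmoid (Z ω) - logisticSigmoid z₀| ≤
          Real.exp t * (p * (1 - p)) * |Z ω - z₀| ∧
        Real.exp (-t) * (p * (1 - p)) * |Z ω - z₀| ≤
          |logisticSigmoid (Z ω) - logisticSigmoid z₀| :=
  sigmoid_mvt_bounds_on_event_general P A Z z₀ t p hp hclose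
end
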